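/- arXiv:1410.1331 — 2 statements merged into one kernel-verified Lean document; each statement's English description precedes it below -/
import Mathlib

section
/- A ring R is J-Armendariz if and only if its trivial extension T(R, R) is J-Armendariz. -/
open Polynomial

/-- A ring `R` is J-Armendariz if whenever `f * g = 0` in `R[X]`, every product of a
coefficient of `f` with a coefficient of `g` lies in the Jacobson radical of `R`. -/
def IsJArmendariz (R : Type*) [Ring R] : Prop :=
  ∀ f g : R[X], f * g = 0 →
    ∀ i j : ℕ, f.coeff i * g.coeff j ∈ Ideal.jacobson (⊥ : Ideal R)

/-!
The kernel of the projection `T(R, M) → R` is a square-zero ideal, so it lies in the Jacobson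
radical; hence the Jacobson radical of `T(R, M)` is exactly the preimage of that of `R`. As the
inclusion `R → T(R, M)` is a section of the projection, a vanishing product of polynomials can be
transported in either direction, and the membership of the coefficient products in the radical
transfers back.
-/

namespace Ideal

variable {A B : Type*} [Ring A] [Ring B]

theorem mem_jacobson_bot_of_forall_isNilpotent_mul_left {x : A}
    (h : ∀ y, IsNilpotent (y * x)) : x ∈ jacobson (⊥ : Ideal A) := by
  refine mem_jacobson_iff.2 fun y => ?_
  obtain ⟨u, hu⟩ := (h y).isUnit_add_one
  refine ⟨↑u⁻¹, mem_bot.2 ?_⟩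
  rw [mul_assoc, ← mul_add_one, ← hu, Units.inv_mul, sub_self]

theorem mem_jacobson_bot_iff_of_ker_le (f : A →+* B) (hf : Function.Surjective f)
    (hker : RingHom.ker f ≤ jacobson ⊥) {x : A} :
    f x ∈ jacobson (⊥ : Ideal B) ↔ x ∈ jacobson (⊥ : Ideal A) := by
  have : RingHomSurjective f := ⟨hf⟩
  rw [jacobson_bot] at hker
  rw [jacobson_bot, jacobson_bot]
  exact SetLike.ext_iff.1 (Module.comap_jacobson_of_ker_le (f := f.toSemilinearMap) hf hker) x

end Ideal

theorem isJArmendariz_iff_of_ker_le_jacobson {A B : Type*} [Ring A] [Ring B] (f : A →+* B)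
    (s : B →+* A) (hs : Function.RightInverse s f) (hker : RingHom.ker f ≤ Ideal.jacobson ⊥) :
    IsJArmendariz A ↔ IsJArmendariz B := by
  have hjac (x : A) := Ideal.mem_jacobson_bot_iff_of_ker_le f hs.surjective hker (x := x)
  constructor
  · intro hA F G hFG i j
    have hsFG : F.map s * G.map s = 0 := by rw [← Polynomial.map_mul, hFG, Polynomial.map_zero]
    have := hA _ _ hsFG i j
    rwa [← hjac, coeff_map, coeff_map, map_mul, hs, hs] at this
  · intro hB F G hFG i j
    have hfFG : F.map f * G.map f = 0 := by rw [← Polynomial.map_mul, hFG, Polynomial.map_zero]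
    rw [← hjac, map_mul, ← coeff_map, ← coeff_map]
    exact hB _ _ hfFG i j

namespace TrivSqZeroExt

variable {R M : Type*} [Ring R] [AddCommGroup M] [Module R M] [Module Rᵐᵒᵖ M]
  [SMulCommClass R Rᵐᵒᵖ M]

theorem ker_fstHom_le_jacobson :
    RingHom.ker (fstHom ℕ R M) ≤ Ideal.jacobson (⊥ : Ideal (TrivSqZeroExt R M)) := fun x hx =>
  Ideal.mem_jacobson_bot_of_forall_isNilpotent_mul_left fun y => by
    have hx0 : x.fst = 0 := RingHom.mem_ker.1 hx
    rw [isNilpotent_iff_isNilpotent_fst, fst_mul, hx0, mul_zero]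
    exact IsNilpotent.zero

theorem isJArmendariz_iff : IsJArmendariz (TrivSqZeroExt R M) ↔ IsJArmendariz R :=
  isJArmendariz_iff_of_ker_le_jacobson (fstHom ℕ R M) (inlHom R M) (fst_inl M)
    ker_fstHom_le_jacobson

end TrivSqZeroExt

theorem isJArmendariz_iff_trivSqZeroExt (R : Type*) [Ring R] :
    IsJArmendariz R ↔ IsJArmendariz (TrivSqZeroExt R R) :=
  TrivSqZeroExt.isJArmendariz_iff.symm
end

section
/- If R is an Armendariz ring, then for any n the upper triangular matrix ring T_n(R) is J-Armendariz. -/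
open Polynomial

/-- A ring is Armendariz if `f * g = 0` in `R[X]` implies all coefficient products vanish. -/
def IsArmendariz (R : Type*) [Ring R] : Prop :=
  ∀ f g : R[X], f * g = 0 → ∀ i j : ℕ, f.coeff i * g.coeff j = 0

/-- The subring of `n × n` upper triangular matrices over `R`. -/
def upperTriangular (n : ℕ) (R : Type*) [Ring R] :
    Subring (Matrix (Fin n) (Fin n) R) where
  carrier := {M | ∀ i j : Fin n, j < i → M i j = 0}
  zero_mem' _ _ _ := rfl
  one_mem' i j hij := Matrix.one_apply_ne (ne_of_gt hij)
  add_mem' {M N} ha hb i j hij := by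
    simp only [Matrix.add_apply, ha i j hij, hb i j hij, add_zero]
  neg_mem' {M} h i j hij := by simp only [Matrix.neg_apply, h i j hij, neg_zero]
  mul_mem' {M N} ha hb := by
    intro i j hij
    rw [Matrix.mul_apply]
    apply Finset.sum_eq_zero
    intro k _
    rcases lt_or_ge k i with h | h
    · rw [ha i k h, zero_mul]
    · rw [hb k j (lt_of_lt_of_le hij h), mul_zero]

/-!
Reading off the `k`-th diagonal entry is a ring homomorphism `T_n(R) → R`. Mapping `f * g = 0`
along it and using that `R` is Armendariz shows that every product `a_i * b_j` has zero diagonal.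
An upper triangular matrix `x` with zero diagonal is in the Jacobson radical: each `y * x` again
has zero diagonal, so it is strictly upper triangular, hence nilpotent, and `1 + y * x` is a unit.
-/

theorem IsArmendariz.map_coeff_mul_coeff_eq_zero {R S : Type*} [Ring R] [Ring S]
    (hR : IsArmendariz R) (φ : S →+* R) {f g : S[X]} (hfg : f * g = 0) (i j : ℕ) :
    φ (f.coeff i * g.coeff j) = 0 := by
  have hmap : f.map φ * g.map φ = 0 := by rw [← Polynomial.map_mul, hfg, Polynomial.map_zero]
  simpa only [coeff_map, map_mul] using hR _ _ hmap i j

theorem Ideal.mem_jacobson_bot_of_forall_isNilpotent_mul {R : Type*} [Ring R] {x : R}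
    (hx : ∀ y, IsNilpotent (y * x)) : x ∈ Ideal.jacobson (⊥ : Ideal R) := by
  rw [Ideal.mem_jacobson_iff]
  intro y
  obtain ⟨u, hu⟩ := (hx y).isUnit_add_one
  refine ⟨↑u⁻¹, ?_⟩
  rw [Submodule.mem_bot, sub_eq_zero, mul_assoc, ← mul_add_one, ← hu, Units.inv_mul]

namespace Matrix

variable {R : Type*} [Semiring R] {n : ℕ}

theorem pow_apply_eq_zero_of_strictlyUpper {M : Matrix (Fin n) (Fin n) R}
    (hM : ∀ i j, j ≤ i → M i j = 0) (k : ℕ) {i j : Fin n} (hij : (j : ℕ) < i + k) :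
    (M ^ k) i j = 0 := by
  induction k generalizing i with
  | zero => exact one_apply_ne (by rintro rfl; omega)
  | succ k ih =>
    rw [pow_succ', mul_apply]
    refine Finset.sum_eq_zero fun l _ => ?_
    rcases le_or_gt l i with hl | hl
    · rw [hM i l hl, zero_mul]
    · rw [ih (by omega), mul_zero]

theorem pow_eq_zero_of_strictlyUpper {M : Matrix (Fin n) (Fin n) R}
    (hM : ∀ i j, j ≤ i → M i j = 0) : M ^ n = 0 := by
  ext i j
  exact pow_apply_eq_zero_of_strictlyUpper hM n (by omega)

end Matrix

namespace upperTriangular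

variable {R : Type*} [Ring R] {n : ℕ}

def diagHom (k : Fin n) : upperTriangular n R →+* R where
  toFun M := (M : Matrix (Fin n) (Fin n) R) k k
  map_one' := Matrix.one_apply_eq k
  map_mul' M N := by
    change ((M : Matrix (Fin n) (Fin n) R) * N) k k = _
    rw [Matrix.mul_apply]
    refine Finset.sum_eq_single_of_mem k (Finset.mem_univ k) fun l _ hl => ?_
    rcases lt_or_gt_of_ne hl with hlt | hgt
    · rw [M.2 k l hlt, zero_mul]
    · rw [N.2 l k hgt, mul_zero]
  map_zero' := rfl
  map_add' _ _ := rfl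

@[simp]
theorem diagHom_apply (k : Fin n) (M : upperTriangular n R) :
    diagHom k M = (M : Matrix (Fin n) (Fin n) R) k k :=
  rfl

theorem isNilpotent_of_diag_eq_zero {x : upperTriangular n R}
    (hx : ∀ k, (x : Matrix (Fin n) (Fin n) R) k k = 0) : IsNilpotent x := by
  refine ⟨n, Subtype.ext ?_⟩
  refine (SubmonoidClass.coe_pow x n).trans
    (Matrix.pow_eq_zero_of_strictlyUpper fun i j hji => ?_)
  rcases hji.eq_or_lt with rfl | hlt
  · exact hx j
  · exact x.2 i j hlt

theorem mem_jacobson_bot_of_diag_eq_zero {x : upperTriangular n R}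
    (hx : ∀ k, (x : Matrix (Fin n) (Fin n) R) k k = 0) :
    x ∈ Ideal.jacobson (⊥ : Ideal (upperTriangular n R)) :=
  Ideal.mem_jacobson_bot_of_forall_isNilpotent_mul fun y =>
    isNilpotent_of_diag_eq_zero fun k => by
      rw [← diagHom_apply, map_mul, diagHom_apply k x, hx, mul_zero]

end upperTriangular

theorem upperTriangular_isJArmendariz_of_isArmendariz (R : Type*) [Ring R]
    (h : IsArmendariz R) (n : ℕ) : IsJArmendariz (upperTriangular n R) := fun _ _ hfg i j =>
  upperTriangular.mem_jacobson_bot_of_diag_eq_zero fun k =>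
    h.map_coeff_mul_coeff_eq_zero (upperTriangular.diagHom k) hfg i j
end
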